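/- arXiv:2002.05027 — 2 statements merged into one kernel-verified Lean document; each statement's English description precedes it below -/
import Mathlib

section
/- For every k ≥ 1, every n ∈ ℤ, and every d = (d1, …, dk) ∈ ℤ^k, the following identity holds in F_k: (z1^n + z2^n + ⋯ + zk^n) · Sh_k(d1, …, dk) = Σ_{i=1}^{k} Sh_k(d1, …, d_{i−1}, d_i + n, d_{i+1}, …, dk). -/
open MvPolynomial Finset

noncomputable section

/-- `Fk k` is the field `F_k = ℂ(q1, q2, z1, …, zk)`, realized as the fraction field of the
polynomial ring `ℂ[q1, q2, z1, …, zk]`. -/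
abbrev Fk (k : ℕ) : Type := FractionRing (MvPolynomial (Fin 2 ⊕ Fin k) ℂ)

/-- The indeterminate `q1` in `F_k`. -/
def q1F (k : ℕ) : Fk k := algebraMap (MvPolynomial (Fin 2 ⊕ Fin k) ℂ) (Fk k) (X (Sum.inl 0))

/-- The indeterminate `q2` in `F_k`. -/
def q2F (k : ℕ) : Fk k := algebraMap (MvPolynomial (Fin 2 ⊕ Fin k) ℂ) (Fk k) (X (Sum.inl 1))

/-- The indeterminates `z1, …, zk` in `F_k` (zero-indexed: `zF k i` is `z_{i+1}`). -/
def zF (k : ℕ) (i : Fin k) : Fk k := algebraMap (MvPolynomial (Fin 2 ⊕ Fin k) ℂ) (Fk k) (X (Sum.inr i))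

/-- `ω(x, y) = (x − q·y)(y − q1·x)(y − q2·x)/(x − y)`, where `q = q1·q2`. -/
def omegaF {K : Type*} [Field K] (q1 q2 x y : K) : K :=
  (x - q1 * q2 * y) * (y - q1 * x) * (y - q2 * x) / (x - y)

/-- The monomial shuffle element
`Sh_k(d) = Σ_{σ ∈ S_k} ∏_{i=1}^k z_{σ(i)}^{d_i} · ∏_{1 ≤ i < j ≤ k} ω(z_{σ(i)}, z_{σ(j)})`,
as a rational expression in the values `z : Fin k → K`. -/
def Sh {K : Type*} [Field K] (q1 q2 : K) {k : ℕ} (z : Fin k → K) (d : Fin k → ℤ) : K :=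
  ∑ σ : Equiv.Perm (Fin k), (∏ i, z (σ i) ^ d i) *
    ∏ p ∈ Finset.univ.filter (fun p : Fin k × Fin k => p.1 < p.2),
      omegaF q1 q2 (z (σ p.1)) (z (σ p.2))

/-- The Laurent polynomial subring `R[z1^{±1}, …, zk^{±1}]` of `K`, where
`R = ℂ[q1^{±1}, q2^{±1}]`: the subring generated by the complex constants,
`q1^{±1}`, `q2^{±1}` and the `z_i^{±1}`. -/
def laurentSubring {K : Type*} [Field K] [Algebra ℂ K] (q1 q2 : K) {k : ℕ} (z : Fin k → K) :
    Subring K :=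
  Subring.closure ((Set.range fun c : ℂ => algebraMap ℂ K c) ∪ {q1, q1⁻¹, q2, q2⁻¹} ∪
    Set.range z ∪ Set.range fun i => (z i)⁻¹)

/-- The `ℂ(q1,q2)`-algebra automorphism of `F_k` fixing `q1, q2` and sending `z_i ↦ z_{τ(i)}`. -/
def permAut (k : ℕ) (τ : Equiv.Perm (Fin k)) : Fk k ≃+* Fk k :=
  IsFractionRing.ringEquivOfRingEquiv
    (MvPolynomial.renameEquiv ℂ (Equiv.sumCongr (Equiv.refl (Fin 2)) τ)).toRingEquiv

/-! The power sum is symmetric, so in the term of `Sh_k(d)` indexed by `σ` it may be written as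
`Σ_i z_{σ(i)}^n`; its `i`-th summand raises exactly the exponent `d_i` of that term. -/

theorem prod_zpow_update_add {ι K : Type*} [Fintype ι] [DecidableEq ι] [CommGroupWithZero K]
    {z : ι → K} {i : ι} (hz : z i ≠ 0) (d : ι → ℤ) (n : ℤ) :
    ∏ j, z j ^ Function.update d i (d i + n) j = z i ^ n * ∏ j, z j ^ d j := by
  rw [← Finset.mul_prod_erase _ _ (Finset.mem_univ i),
    ← Finset.mul_prod_erase _ (fun j => z j ^ d j) (Finset.mem_univ i),
    Function.update_self, zpow_add₀ hz, mul_comm (z i ^ d i), mul_assoc,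
    Finset.prod_congr rfl fun j hj => by rw [Function.update_of_ne (Finset.ne_of_mem_erase hj)]]

theorem sum_zpow_mul_Sh {K : Type*} [Field K] (q1 q2 : K) {k : ℕ} {z : Fin k → K}
    (hz : ∀ i, z i ≠ 0) (n : ℤ) (d : Fin k → ℤ) :
    (∑ i, z i ^ n) * Sh q1 q2 z d = ∑ i, Sh q1 q2 z (Function.update d i (d i + n)) := by
  unfold Sh
  rw [Finset.mul_sum, Finset.sum_comm]
  refine Finset.sum_congr rfl fun σ _ => ?_
  rw [← Equiv.sum_comp σ, ← mul_assoc, Finset.sum_mul, Finset.sum_mul]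
  refine Finset.sum_congr rfl fun i _ => ?_
  rw [prod_zpow_update_add (z := fun j => z (σ j)) (hz (σ i))]

theorem zF_ne_zero (k : ℕ) (i : Fin k) : zF k i ≠ 0 :=
  (map_ne_zero_iff _ (IsFractionRing.injective _ _)).mpr (X_ne_zero (Sum.inr i))

theorem sh_mul_power_sum_general (k : ℕ) (n : ℤ) (d : Fin k → ℤ) :
    (∑ i, zF k i ^ n) * Sh (q1F k) (q2F k) (zF k) d =
      ∑ i, Sh (q1F k) (q2F k) (zF k) (Function.update d i (d i + n)) :=
  sum_zpow_mul_Sh _ _ (zF_ne_zero k) n d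

/-- For every `k ≥ 1`, `n ∈ ℤ`, `d ∈ ℤ^k`:
`(z1^n + ⋯ + zk^n) · Sh_k(d) = Σ_{i=1}^k Sh_k(d1, …, d_i + n, …, dk)` in `F_k`. -/
theorem sh_mul_power_sum (k : ℕ) (hk : 1 ≤ k) (n : ℤ) (d : Fin k → ℤ) :
    (∑ i, zF k i ^ n) * Sh (q1F k) (q2F k) (zF k) d =
      ∑ i, Sh (q1F k) (q2F k) (zF k) (Function.update d i (d i + n)) :=
  sh_mul_power_sum_general k n d

end
end

section
/- In the field ℂ(q1, q2, z1, z2) with q = q1·q2, the following identity of monomial shuffle elements holds: 2·Sh_2(1, 0) − (z1 + z2)·Sh_2(0, 0) = z1·z2·(1 − q1)(1 − q2)(1 − q)·(z1 + z2). -/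
open MvPolynomial Finset

noncomputable section

/- Since `2·Sh₂(1,0) − (z₁+z₂)·Sh₂(0,0) = (z₁ − z₂)·(ω(z₁,z₂) − ω(z₂,z₁))`, the factor `z₁ − z₂`
cancels the denominators of both `ω` terms. What remains is the sum of the numerators of
`ω(z₁,z₂)` and `ω(z₂,z₁)`, a symmetric polynomial that factors as claimed. -/

section

variable {K : Type*} [Field K]

theorem sub_mul_omegaF (q1 q2 : K) {x y : K} (hxy : x ≠ y) :
    (x - y) * omegaF q1 q2 x y = (x - q1 * q2 * y) * (y - q1 * x) * (y - q2 * x) :=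
  mul_div_cancel₀ _ (sub_ne_zero.mpr hxy)

theorem Sh_two (q1 q2 : K) (z : Fin 2 → K) (d : Fin 2 → ℤ) :
    Sh q1 q2 z d = z 0 ^ d 0 * z 1 ^ d 1 * omegaF q1 q2 (z 0) (z 1)
      + z 1 ^ d 0 * z 0 ^ d 1 * omegaF q1 q2 (z 1) (z 0) := by
  have hperm : (univ : Finset (Equiv.Perm (Fin 2))) = {1, Equiv.swap 0 1} := by decide
  have hpairs : univ.filter (fun p : Fin 2 × Fin 2 => p.1 < p.2) = {(0, 1)} := by decide
  rw [Sh, hperm, hpairs, sum_insert (by decide), sum_singleton]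
  simp [Fin.prod_univ_two]

theorem two_mul_Sh_one_zero_sub (q1 q2 : K) {z : Fin 2 → K} (hz : z 0 ≠ z 1) :
    2 * Sh q1 q2 z ![1, 0] - (z 0 + z 1) * Sh q1 q2 z ![0, 0] =
      z 0 * z 1 * ((1 - q1) * (1 - q2) * (1 - q1 * q2)) * (z 0 + z 1) := by
  simp only [Sh_two, Matrix.cons_val_zero, Matrix.cons_val_one, zpow_one,
    zpow_zero, one_mul, mul_one]
  calc _ = (z 0 - z 1) * omegaF q1 q2 (z 0) (z 1) + (z 1 - z 0) * omegaF q1 q2 (z 1) (z 0) := by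
        ring
    _ = (z 0 - q1 * q2 * z 1) * (z 1 - q1 * z 0) * (z 1 - q2 * z 0)
          + (z 1 - q1 * q2 * z 0) * (z 0 - q1 * z 1) * (z 0 - q2 * z 1) := by
        rw [sub_mul_omegaF q1 q2 hz, sub_mul_omegaF q1 q2 hz.symm]
    _ = _ := by ring

end

theorem zF_injective (k : ℕ) : Function.Injective (zF k) :=
  (IsFractionRing.injective (MvPolynomial (Fin 2 ⊕ Fin k) ℂ) (Fk k)).comp
    (MvPolynomial.X_injective.comp Sum.inr_injective)

/-- In `ℂ(q1, q2, z1, z2)` with `q = q1·q2`: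
`2·Sh_2(1, 0) − (z1 + z2)·Sh_2(0, 0) = z1·z2·(1 − q1)(1 − q2)(1 − q)·(z1 + z2)`. -/
theorem two_sh_one_zero_sub :
    2 * Sh (q1F 2) (q2F 2) (zF 2) ![1, 0]
        - (zF 2 0 + zF 2 1) * Sh (q1F 2) (q2F 2) (zF 2) ![0, 0] =
      zF 2 0 * zF 2 1 *
        ((1 - q1F 2) * (1 - q2F 2) * (1 - q1F 2 * q2F 2)) * (zF 2 0 + zF 2 1) :=
  two_mul_Sh_one_zero_sub _ _ ((zF_injective 2).ne (by decide))

end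
end
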